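/- Let (X, Y) be an exceptional pair in C such that Hom(X, Y⟦m⟧) = 0 for all m ≠ 0 and Hom(X, Y) is one-dimensional over k. Let f : X → Y be a nonzero morphism and let W → X →f Y → W⟦1⟧ be a distinguished triangle. Then (W, X) is an exceptional pair; in particular W is an exceptional object and Hom(X, W⟦m⟧) = 0 for all m ∈ ℤ. (The object W is the left mutation L_X Y of Y at X.) -/

import Mathlib

open CategoryTheory CategoryTheory.Limits CategoryTheory.Pretriangulated

/-- An object `X` of a `k`-linear additive category with shift is exceptional if
`Hom(X, X⟦m⟧) = 0` for all `m ≠ 0` and `Hom(X, X)` is one-dimensional over `k`. -/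
def IsExceptional (k : Type*) [Field k] {C : Type*} [Category C] [Preadditive C]
    [Linear k C] [HasShift C ℤ] (X : C) : Prop :=
  (∀ m : ℤ, m ≠ 0 → ∀ f : X ⟶ X⟦m⟧, f = 0) ∧ Module.finrank k (X ⟶ X) = 1

/-!
Everything comes from the long exact `Hom`-sequences of the triangle `W → X → Y → W⟦1⟧`.
Applying `Hom(X, -)`, the space `Hom(X, W⟦m⟧)` sits between `Hom(X, Y⟦m-1⟧)` and `Hom(X, X⟦m⟧)`,
which vanish unless `m = 0, 1`; in those two degrees its vanishing says that
`g ↦ g ≫ f : Hom(X, X) → Hom(X, Y)` is bijective, true because both spaces are lines and `f ≠ 0`.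
The same argument with `Hom(Y, -)` and then `Hom(-, W⟦m⟧)` gives `Hom(W, W⟦m⟧) = 0` for `m ≠ 0`.
Finally `w` induces an isomorphism `Hom(X, X) ≅ Hom(W, X)` and an injection
`Hom(W, W) ↪ Hom(W, X)`, so `Hom(W, W)` is a line as well.
-/

lemma IsExceptional.subsingleton_hom_shift {k : Type*} [Field k] {C : Type*} [Category C]
    [Preadditive C] [Linear k C] [HasShift C ℤ] {X : C} (hX : IsExceptional k X) {m : ℤ}
    (hm : m ≠ 0) : Subsingleton (X ⟶ X⟦m⟧) :=
  subsingleton_of_forall_eq 0 (hX.1 m hm)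

section OneDimensionalHoms

variable {k : Type*} [Field k] {C : Type*} [Category C] [Preadditive C] [Linear k C]

lemma id_ne_zero_of_finrank_end_eq_one {X : C} (hX : Module.finrank k (X ⟶ X) = 1) :
    𝟙 X ≠ 0 := by
  intro h0
  have : Subsingleton (X ⟶ X) :=
    subsingleton_of_forall_eq 0 fun g => by rw [← Category.comp_id g, h0, comp_zero]
  simp [Module.finrank_zero_of_subsingleton] at hX

lemma exists_eq_smul_id_of_finrank_end_eq_one {X : C} (hX : Module.finrank k (X ⟶ X) = 1)
    (g : X ⟶ X) : ∃ c : k, g = c • 𝟙 X := by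
  obtain ⟨c, hc⟩ :=
    (finrank_eq_one_iff_of_nonzero' _ (id_ne_zero_of_finrank_end_eq_one hX)).1 hX g
  exact ⟨c, hc.symm⟩

lemma eq_zero_of_comp_eq_zero_of_finrank_end_eq_one {X Y : C}
    (hX : Module.finrank k (X ⟶ X) = 1) {f : X ⟶ Y} (hf : f ≠ 0) {g : X ⟶ X} (hg : g ≫ f = 0) :
    g = 0 := by
  obtain ⟨c, rfl⟩ := exists_eq_smul_id_of_finrank_end_eq_one hX g
  rw [Linear.smul_comp, Category.id_comp, smul_eq_zero] at hg
  rw [hg.resolve_right hf, zero_smul]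

lemma eq_zero_of_comp_eq_zero_of_finrank_end_eq_one' {X Y : C}
    (hY : Module.finrank k (Y ⟶ Y) = 1) {f : X ⟶ Y} (hf : f ≠ 0) {g : Y ⟶ Y} (hg : f ≫ g = 0) :
    g = 0 := by
  obtain ⟨c, rfl⟩ := exists_eq_smul_id_of_finrank_end_eq_one hY g
  rw [Linear.comp_smul, Category.comp_id, smul_eq_zero] at hg
  rw [hg.resolve_right hf, zero_smul]

lemma exists_eq_comp_of_finrank_hom_eq_one {X Y : C} (hXY : Module.finrank k (X ⟶ Y) = 1)
    {f : X ⟶ Y} (hf : f ≠ 0) (g : X ⟶ Y) : ∃ e : X ⟶ X, g = e ≫ f := by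
  obtain ⟨c, rfl⟩ := (finrank_eq_one_iff_of_nonzero' f hf).1 hXY g
  exact ⟨c • 𝟙 X, by rw [Linear.smul_comp, Category.id_comp]⟩

end OneDimensionalHoms

lemma subsingleton_hom_iff_of_iso {C : Type*} [Category C] {A B B' : C} (e : B ≅ B') :
    Subsingleton (A ⟶ B) ↔ Subsingleton (A ⟶ B') :=
  ((Iso.refl A).homCongr e).subsingleton_congr

lemma subsingleton_shift_hom_iff {C : Type*} [Category C] [HasShift C ℤ] {A B : C} {a b : ℤ}
    (hab : a + b = 0) : Subsingleton (A⟦a⟧ ⟶ B) ↔ Subsingleton (A ⟶ B⟦b⟧) :=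
  ((shiftEquiv' C a b hab).toAdjunction.homEquiv A B).subsingleton_congr

namespace CategoryTheory.Pretriangulated

variable {C : Type*} [Category C] [HasZeroObject C] [HasShift C ℤ] [Preadditive C]
  [∀ n : ℤ, (CategoryTheory.shiftFunctor C n).Additive] [Pretriangulated C] {T : Triangle C}

lemma Triangle.subsingleton_hom_shift_obj₁ (hT : T ∈ distTriang C) {A : C} (m : ℤ)
    (h₃ : Subsingleton (A ⟶ T.obj₃⟦m - 1⟧)) (h₂ : Subsingleton (A ⟶ T.obj₂⟦m⟧)) :
    Subsingleton (A ⟶ T.obj₁⟦m⟧) := by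
  let T' := ((CategoryTheory.shiftFunctor (Triangle C) m).obj T).invRotate
  have hT' : T' ∈ distTriang C := inv_rot_of_distTriang _ (T.shift_distinguished hT m)
  have h₁' : Subsingleton (A ⟶ T'.obj₁) :=
    (subsingleton_hom_iff_of_iso (A := A)
      ((CategoryTheory.shiftFunctorAdd' C m (-1) (m - 1) (by omega)).app T.obj₃)).1 h₃
  refine subsingleton_of_forall_eq 0 fun u => ?_
  obtain ⟨g, rfl⟩ := Triangle.coyoneda_exact₂ T' hT' u (Subsingleton.elim (h := h₂) _ _)
  rw [Subsingleton.elim (h := h₁') g 0]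
  exact zero_comp

lemma Triangle.exists_eq_mor₁_comp (hT : T ∈ distTriang C) {B : C}
    (h₃ : Subsingleton (T.obj₃ ⟶ B⟦(1 : ℤ)⟧)) (u : T.obj₁ ⟶ B) :
    ∃ g : T.obj₂ ⟶ B, u = T.mor₁ ≫ g := by
  have h₃' : Subsingleton (T.invRotate.obj₁ ⟶ B) :=
    (subsingleton_shift_hom_iff (by norm_num)).2 h₃
  exact Triangle.yoneda_exact₂ T.invRotate (inv_rot_of_distTriang T hT) u (Subsingleton.elim _ _)

lemma Triangle.subsingleton_obj₁_hom (hT : T ∈ distTriang C) {B : C}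
    (h₂ : Subsingleton (T.obj₂ ⟶ B))
    (h₃ : Subsingleton (T.obj₃ ⟶ B⟦(1 : ℤ)⟧)) : Subsingleton (T.obj₁ ⟶ B) := by
  refine subsingleton_of_forall_eq 0 fun u => ?_
  obtain ⟨g, rfl⟩ := Triangle.exists_eq_mor₁_comp hT h₃ u
  rw [Subsingleton.elim g 0, comp_zero]

end CategoryTheory.Pretriangulated

section LeftMutation

variable {k : Type*} [Field k] {C : Type*} [Category C] [HasZeroObject C] [Preadditive C]
  [Linear k C] [HasShift C ℤ] [∀ n : ℤ, (shiftFunctor C n).Additive] [Pretriangulated C]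
  {W X Y : C} {w : W ⟶ X} {f : X ⟶ Y} {h : Y ⟶ W⟦(1 : ℤ)⟧}

lemma subsingleton_hom_source_mutation (hX : Module.finrank k (X ⟶ X) = 1) (hf : f ≠ 0)
    (hXY : Subsingleton (X ⟶ Y⟦(-1 : ℤ)⟧)) (hT : Triangle.mk w f h ∈ distTriang C) :
    Subsingleton (X ⟶ W) := by
  refine subsingleton_of_forall_eq 0 fun u => ?_
  have hwf : w ≫ f = 0 := comp_distTriang_mor_zero₁₂ _ hT
  have huw : u ≫ w = 0 := eq_zero_of_comp_eq_zero_of_finrank_end_eq_one hX hf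
    (by rw [Category.assoc, hwf, comp_zero])
  obtain ⟨g, rfl⟩ := Triangle.coyoneda_exact₂ _ (inv_rot_of_distTriang _ hT) u huw
  rw [Subsingleton.elim (h := hXY) g 0]
  exact zero_comp

lemma subsingleton_hom_source_mutation_shift_one (hX : Subsingleton (X ⟶ X⟦(1 : ℤ)⟧))
    (hXY : Module.finrank k (X ⟶ Y) = 1) (hf : f ≠ 0) (hT : Triangle.mk w f h ∈ distTriang C) :
    Subsingleton (X ⟶ W⟦(1 : ℤ)⟧) := by
  refine subsingleton_of_forall_eq 0 fun u => ?_
  have hfh : f ≫ h = 0 := comp_distTriang_mor_zero₂₃ _ hT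
  obtain ⟨g, rfl⟩ := Triangle.coyoneda_exact₁ _ hT u (Subsingleton.elim (h := hX) _ _)
  obtain ⟨e, rfl⟩ := exists_eq_comp_of_finrank_hom_eq_one hXY hf g
  change (e ≫ f) ≫ h = 0
  rw [Category.assoc, hfh, comp_zero]

lemma subsingleton_hom_source_mutation_shift (hXX : ∀ m : ℤ, m ≠ 0 → Subsingleton (X ⟶ X⟦m⟧))
    (hX : Module.finrank k (X ⟶ X) = 1) (hXY : ∀ m : ℤ, m ≠ 0 → Subsingleton (X ⟶ Y⟦m⟧))
    (hXY1 : Module.finrank k (X ⟶ Y) = 1)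
    (hf : f ≠ 0) (hT : Triangle.mk w f h ∈ distTriang C) (m : ℤ) :
    Subsingleton (X ⟶ W⟦m⟧) := by
  obtain rfl | rfl | hm := show m = 0 ∨ m = 1 ∨ (m ≠ 0 ∧ m ≠ 1) by omega
  · exact (subsingleton_hom_iff_of_iso ((shiftFunctorZero C ℤ).app W).symm).1
      (subsingleton_hom_source_mutation hX hf (hXY (-1) (by norm_num)) hT)
  · exact subsingleton_hom_source_mutation_shift_one (hXX 1 one_ne_zero) hXY1 hf hT
  · exact Triangle.subsingleton_hom_shift_obj₁ hT m (hXY (m - 1) (by omega)) (hXX m hm.1)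

lemma subsingleton_hom_target_mutation_shift (hY : ∀ m : ℤ, m ≠ 0 → Subsingleton (Y ⟶ Y⟦m⟧))
    (hYX : ∀ m : ℤ, Subsingleton (Y ⟶ X⟦m⟧)) (hT : Triangle.mk w f h ∈ distTriang C) {m : ℤ}
    (hm : m ≠ 1) : Subsingleton (Y ⟶ W⟦m⟧) :=
  Triangle.subsingleton_hom_shift_obj₁ hT m (hY (m - 1) (by omega)) (hYX m)

lemma subsingleton_end_mutation_shift (hXW : ∀ m : ℤ, Subsingleton (X ⟶ W⟦m⟧))
    (hYW : ∀ m : ℤ, m ≠ 1 → Subsingleton (Y ⟶ W⟦m⟧)) (hT : Triangle.mk w f h ∈ distTriang C)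
    {m : ℤ} (hm : m ≠ 0) : Subsingleton (W ⟶ W⟦m⟧) :=
  Triangle.subsingleton_obj₁_hom hT (hXW m) <| (subsingleton_hom_iff_of_iso
    ((shiftFunctorAdd' C m 1 (m + 1) rfl).app W)).1 (hYW (m + 1) (by omega))

lemma subsingleton_hom_mutation_target_shift_neg_one (hY : Module.finrank k (Y ⟶ Y) = 1)
    (hf : f ≠ 0) (hXY : Subsingleton (X ⟶ Y⟦(-1 : ℤ)⟧)) (hT : Triangle.mk w f h ∈ distTriang C) :
    Subsingleton (W ⟶ Y⟦(-1 : ℤ)⟧) := by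
  rw [← subsingleton_shift_hom_iff (add_neg_cancel 1)]
  have hXY' : Subsingleton (X⟦(1 : ℤ)⟧ ⟶ Y) :=
    (subsingleton_shift_hom_iff (add_neg_cancel 1)).2 hXY
  refine subsingleton_of_forall_eq 0 fun u => ?_
  have hfh : f ≫ h = 0 := comp_distTriang_mor_zero₂₃ _ hT
  have hu : h ≫ u = 0 := eq_zero_of_comp_eq_zero_of_finrank_end_eq_one' hY hf
    (by rw [← Category.assoc, hfh, zero_comp])
  obtain ⟨g, rfl⟩ := Triangle.yoneda_exact₃ _ (rot_of_distTriang _ hT) u hu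
  rw [Subsingleton.elim (h := hXY') g 0]
  exact comp_zero

lemma finrank_hom_mutation_source (hX : Module.finrank k (X ⟶ X) = 1)
    (hYX : Subsingleton (Y ⟶ X)) (hYX₁ : Subsingleton (Y ⟶ X⟦(1 : ℤ)⟧))
    (hT : Triangle.mk w f h ∈ distTriang C) : Module.finrank k (W ⟶ X) = 1 := by
  have hbij : Function.Bijective (Linear.leftComp k X w) := by
    refine ⟨(injective_iff_map_eq_zero _).2 fun g hg => ?_, fun u => ?_⟩
    · obtain ⟨g', rfl⟩ := Triangle.yoneda_exact₂ _ hT g hg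
      rw [Subsingleton.elim (h := hYX) g' 0]
      exact comp_zero
    · obtain ⟨g, hg⟩ := Triangle.exists_eq_mor₁_comp hT hYX₁ u
      exact ⟨g, hg.symm⟩
  rw [← (LinearEquiv.ofBijective _ hbij).finrank_eq, hX]

lemma finrank_end_mutation (hWX : Module.finrank k (W ⟶ X) = 1)
    (hWY : Subsingleton (W ⟶ Y⟦(-1 : ℤ)⟧)) (hT : Triangle.mk w f h ∈ distTriang C) :
    Module.finrank k (W ⟶ W) = 1 := by
  have hinj : Function.Injective (Linear.rightComp k W w) := by
    refine (injective_iff_map_eq_zero _).2 fun u hu => ?_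
    obtain ⟨g, rfl⟩ := Triangle.coyoneda_exact₂ _ (inv_rot_of_distTriang _ hT) u hu
    rw [Subsingleton.elim (h := hWY) g 0]
    exact zero_comp
  have : Module.Finite k (W ⟶ X) := Module.finite_of_finrank_eq_succ hWX
  have : Module.Finite k (W ⟶ W) := Module.Finite.of_injective _ hinj
  have : Nontrivial (W ⟶ X) := Module.nontrivial_of_finrank_eq_succ hWX
  obtain ⟨u, hu⟩ := exists_ne (0 : W ⟶ X)
  have : Nontrivial (W ⟶ W) :=
    ⟨⟨𝟙 W, 0, fun h0 => hu (by rw [← Category.id_comp u, h0, zero_comp])⟩⟩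
  exact le_antisymm (hWX ▸ LinearMap.finrank_le_finrank_of_injective hinj) Module.finrank_pos

end LeftMutation

/-- Left mutation of an exceptional pair: if `(X, Y)` is an exceptional pair with
`Hom(X, Y⟦m⟧) = 0` for `m ≠ 0` and `Hom(X, Y)` one-dimensional, `f : X ⟶ Y` nonzero, and
`W ⟶ X ⟶ Y ⟶ W⟦1⟧` a distinguished triangle, then `(W, X)` is an exceptional pair: `W` is
exceptional and `Hom(X, W⟦m⟧) = 0` for all `m`. (`W` is the left mutation `L_X Y`.) -/
theorem left_mutation_exceptional_pair (k : Type*) [Field k] {C : Type*} [Category C]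
    [HasZeroObject C] [Preadditive C] [Linear k C] [HasShift C ℤ]
    [∀ m : ℤ, (shiftFunctor C m).Additive] [∀ m : ℤ, (shiftFunctor C m).Linear k]
    [Pretriangulated C]
    {W X Y : C}
    (hX : IsExceptional k X) (hY : IsExceptional k Y)
    (hpair : ∀ m : ℤ, ∀ f : Y ⟶ X⟦m⟧, f = 0)
    (hXY0 : ∀ m : ℤ, m ≠ 0 → ∀ f : X ⟶ Y⟦m⟧, f = 0)
    (hXY1 : Module.finrank k (X ⟶ Y) = 1)
    (f : X ⟶ Y) (hf : f ≠ 0)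
    (w : W ⟶ X) (h : Y ⟶ W⟦(1 : ℤ)⟧)
    (hT : Triangle.mk w f h ∈ distTriang C) :
    IsExceptional k W ∧ ∀ m : ℤ, ∀ u : X ⟶ W⟦m⟧, u = 0 := by
  have hXY (m : ℤ) (hm : m ≠ 0) : Subsingleton (X ⟶ Y⟦m⟧) :=
    subsingleton_of_forall_eq 0 (hXY0 m hm)
  have hYX (m : ℤ) : Subsingleton (Y ⟶ X⟦m⟧) := subsingleton_of_forall_eq 0 (hpair m)
  have hXW := subsingleton_hom_source_mutation_shift (fun _ => hX.subsingleton_hom_shift) hX.2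
    hXY hXY1 hf hT
  have hWW (m : ℤ) (hm : m ≠ 0) : Subsingleton (W ⟶ W⟦m⟧) :=
    subsingleton_end_mutation_shift hXW (fun _ =>
      subsingleton_hom_target_mutation_shift (fun _ => hY.subsingleton_hom_shift) hYX hT) hT hm
  have hWX : Module.finrank k (W ⟶ X) = 1 := finrank_hom_mutation_source hX.2
    ((subsingleton_hom_iff_of_iso ((shiftFunctorZero C ℤ).app X)).1 (hYX 0)) (hYX 1) hT
  have hWY := subsingleton_hom_mutation_target_shift_neg_one hY.2 hf (hXY (-1) (by norm_num)) hT
  exact ⟨⟨fun m hm u => Subsingleton.elim (h := hWW m hm) u 0, finrank_end_mutation hWX hWY hT⟩,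
    fun m u => Subsingleton.elim (h := hXW m) u 0⟩
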